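/- Let R →^β A_0 →^γ A_1 be ring homomorphisms with α = γ ∘ β. Suppose there is a surjection A_0^m ↠ A_1 of A_0-bimodules for some m, and PC_l(β) holds. Then PC_l(α) holds, and S_l(α) = {s ∈ A_1 : as ∈ γ(S_l(β)) for some a ∈ A_1}. -/

import Mathlib

/-- A left ideal `L` of `A` is `R`-cofinite (via `α : R →+* A`) if `A ⧸ L` is a
Noetherian left `R`-module via restriction of scalars along `α`. -/
def RCofiniteIdeal {R A : Type*} [Ring R] [Ring A] (α : R →+* A)
    (L : Submodule A A) : Prop :=
  @IsNoetherian R (A ⧸ L) _ _ (Module.compHom _ α)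

/-- `s ∈ A` is left `R`-cofinite if `A ⧸ As` is a Noetherian left `R`-module via `α`. -/
def LeftCofinite {R A : Type*} [Ring R] [Ring A] (α : R →+* A) (s : A) : Prop :=
  RCofiniteIdeal α (Submodule.span A {s})

/-- `PC_l(α)`: every `R`-cofinite left ideal of `A` contains a left `R`-cofinite element. -/
def PCl {R A : Type*} [Ring R] [Ring A] (α : R →+* A) : Prop :=
  ∀ L : Submodule A A, RCofiniteIdeal α L → ∃ s ∈ L, LeftCofinite α s

/-! The pullback `γ⁻¹ L` of an `α`-cofinite left ideal `L` is `β`-cofinite, since `A₀ ⧸ γ⁻¹ L`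
embeds into `A₁ ⧸ L`; so `PC_l(β)` gives `s₀ ∈ S_l(β)` with `γ s₀ ∈ L`. Conversely, for a left
ideal `I` of `A₀`, the quotient `A₁ ⧸ A₁ γ(I)` is an image of `(A₀ ⧸ I)^m` under
`(cᵢ) ↦ ∑ γ(cᵢ) uᵢ`, which is well defined because the `uᵢ` commute with `γ(A₀)`; hence
`γ(S_l(β)) ⊆ S_l(α)`, and `S_l(α)` is closed under passing from `a * s` to `s`. -/

section CompHom

variable {R S M N : Type*} [Ring R] [Ring S] [AddCommGroup M] [Module S M]
  [AddCommGroup N] [Module S N]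

theorem isNoetherian_compHom_of_surjective (β : R →+* S) (f : M →ₗ[S] N)
    (hf : Function.Surjective f) (hM : @IsNoetherian R M _ _ (Module.compHom M β)) :
    @IsNoetherian R N _ _ (Module.compHom N β) := by
  let _ := Module.compHom M β
  let _ := Module.compHom N β
  let g : M →ₗ[R] N := { f.toAddMonoidHom with map_smul' := fun r ↦ f.map_smul (β r) }
  exact isNoetherian_of_surjective g (LinearMap.range_eq_top.mpr hf)

theorem isNoetherian_compHom_of_injective (β : R →+* S) (f : M →ₗ[S] N)
    (hf : Function.Injective f) (hN : @IsNoetherian R N _ _ (Module.compHom N β)) :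
    @IsNoetherian R M _ _ (Module.compHom M β) := by
  let _ := Module.compHom M β
  let _ := Module.compHom N β
  let g : M →ₗ[R] N := { f.toAddMonoidHom with map_smul' := fun r ↦ f.map_smul (β r) }
  exact isNoetherian_of_injective g hf

end CompHom

section Cofinite

variable {R A A₀ A₁ : Type*} [Ring R] [Ring A] [Ring A₀] [Ring A₁]

theorem RCofiniteIdeal.of_le {α : R →+* A} {I J : Submodule A A} (hIJ : I ≤ J)
    (hI : RCofiniteIdeal α I) : RCofiniteIdeal α J :=
  isNoetherian_compHom_of_surjective α (Submodule.factor hIJ) (Submodule.factor_surjective hIJ) hI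

theorem LeftCofinite.of_mul_left {α : R →+* A} {a s : A} (h : LeftCofinite α (a * s)) :
    LeftCofinite α s :=
  RCofiniteIdeal.of_le (Submodule.span_singleton_le_iff_mem _ _ |>.mpr <|
    Submodule.smul_mem _ a (Submodule.mem_span_singleton_self s)) h

theorem RCofiniteIdeal.comap (β : R →+* A₀) (γ : A₀ →+* A₁) {L : Ideal A₁}
    (hL : RCofiniteIdeal (γ.comp β) L) : RCofiniteIdeal β (L.comap γ) := by
  let _ : Module A₀ (A₁ ⧸ L) := Module.compHom _ γ
  let g : A₀ →ₗ[A₀] A₁ ⧸ L :=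
    { toFun := fun a ↦ Submodule.Quotient.mk (γ a)
      map_add' := by simp
      map_smul' := fun a b ↦ by rw [RingHom.id_apply, smul_eq_mul, map_mul]; rfl }
  have hker : L.comap γ = LinearMap.ker g := by
    ext a; simp [g, Submodule.Quotient.mk_eq_zero]
  exact isNoetherian_compHom_of_injective β (Submodule.liftQ _ g hker.le)
    (LinearMap.ker_eq_bot.mp (Submodule.ker_liftQ_eq_bot' _ g hker)) hL

theorem RCofiniteIdeal.map (β : R →+* A₀) (γ : A₀ →+* A₁) {m : ℕ} {u : Fin m → A₁}
    (hcomm : ∀ (i : Fin m) (a : A₀), γ a * u i = u i * γ a)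
    (hsurj : ∀ x : A₁, ∃ c : Fin m → A₀, x = ∑ i, γ (c i) * u i)
    {I : Ideal A₀} (hI : RCofiniteIdeal β I) : RCofiniteIdeal (γ.comp β) (I.map γ) := by
  let _ : Module A₀ (A₁ ⧸ I.map γ) := Module.compHom _ γ
  have hker (i : Fin m) :
      I ≤ LinearMap.ker (LinearMap.toSpanSingleton A₀ _ ((I.map γ).mkQ (u i))) := by
    intro c hc
    change Submodule.Quotient.mk (γ c * u i) = (0 : A₁ ⧸ I.map γ)
    rw [Submodule.Quotient.mk_eq_zero, hcomm]
    exact (I.map γ).mul_mem_left (u i) (Ideal.mem_map_of_mem γ hc)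
  let F : (Fin m → A₀ ⧸ I) →ₗ[A₀] A₁ ⧸ I.map γ :=
    ∑ i, (I.liftQ _ (hker i)).comp (LinearMap.proj i)
  have hF : Function.Surjective F := by
    intro y
    obtain ⟨x, rfl⟩ := Submodule.Quotient.mk_surjective _ y
    obtain ⟨c, rfl⟩ := hsurj x
    refine ⟨fun i ↦ Submodule.Quotient.mk (c i), ?_⟩
    simp only [F, LinearMap.coe_sum, LinearMap.coe_comp, LinearMap.coe_proj, Finset.sum_apply,
      Function.comp_apply, Function.eval, Submodule.liftQ_apply, LinearMap.toSpanSingleton_apply]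
    exact (map_sum (I.map γ).mkQ _ _).symm
  let _ := Module.compHom (A₀ ⧸ I) β
  have : IsNoetherian R (A₀ ⧸ I) := hI
  exact isNoetherian_compHom_of_surjective β F hF inferInstance

theorem LeftCofinite.map (β : R →+* A₀) (γ : A₀ →+* A₁) {m : ℕ} {u : Fin m → A₁}
    (hcomm : ∀ (i : Fin m) (a : A₀), γ a * u i = u i * γ a)
    (hsurj : ∀ x : A₁, ∃ c : Fin m → A₀, x = ∑ i, γ (c i) * u i)
    {s₀ : A₀} (h : LeftCofinite β s₀) : LeftCofinite (γ.comp β) (γ s₀) := by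
  have h' := RCofiniteIdeal.map β γ hcomm hsurj (I := Ideal.span {s₀}) h
  rwa [Ideal.map_span, Set.image_singleton] at h'

end Cofinite

/-- Let `R →β A₀ →γ A₁` with `α = γ ∘ β`. Suppose `A₁` is an epimorphic image of the
`A₀`-bimodule `A₀^m` (witnessed by elements `u i` centralising the image of `γ`, which
generate `A₁` as a left module over the image of `γ`), and `PC_l(β)` holds. Then
`PC_l(α)` holds and `S_l(α) = { s : as ∈ γ(S_l(β)) for some a }`. -/
theorem pcl_comp_of_bimodule_surjection {R A₀ A₁ : Type*} [Ring R] [Ring A₀] [Ring A₁]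
    (β : R →+* A₀) (γ : A₀ →+* A₁) (m : ℕ) (u : Fin m → A₁)
    (hcomm : ∀ (i : Fin m) (a : A₀), γ a * u i = u i * γ a)
    (hsurj : ∀ x : A₁, ∃ c : Fin m → A₀, x = ∑ i, γ (c i) * u i)
    (hβ : PCl β) :
    PCl (γ.comp β) ∧
      ∀ s : A₁, LeftCofinite (γ.comp β) s ↔
        ∃ (a : A₁) (s₀ : A₀), LeftCofinite β s₀ ∧ a * s = γ s₀ := by
  refine ⟨fun L hL ↦ ?_, fun s ↦ ⟨fun hs ↦ ?_, ?_⟩⟩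
  · obtain ⟨s₀, hs₀L, hs₀⟩ := hβ _ (hL.comap β γ)
    exact ⟨γ s₀, hs₀L, hs₀.map β γ hcomm hsurj⟩
  · obtain ⟨s₀, hs₀s, hs₀⟩ := hβ _ (RCofiniteIdeal.comap β γ hs)
    obtain ⟨a, has⟩ := Submodule.mem_span_singleton.mp hs₀s
    exact ⟨a, s₀, hs₀, has⟩
  · rintro ⟨a, s₀, hs₀, has⟩
    exact LeftCofinite.of_mul_left (has ▸ hs₀.map β γ hcomm hsurj)
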